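/- Fix integers k ≥ 2 and l ≥ 1. Let 𝔅 be the (l+1)×(l+1) matrix with rational entries whose rows are indexed by j = 0,…,l and columns by i = 1,…,l+1, with entry 𝔅(j,i) = C(k+j−1, 2j+i−l) + C(k+j, 2j+i−l), where C(n,m) denotes the binomial coefficient, with the convention that C(n,m) = 0 whenever m < 0 or m > n. For an integer p with 0 ≤ p ≤ ⌊l/2⌋, let 𝔅_p be the (l+1−2p)×(l+1−2p) submatrix of 𝔅 obtained by deleting the last 2p columns, the first p rows, and the last p rows (i.e., keeping rows p ≤ j ≤ l−p and columns 1 ≤ i ≤ l+1−2p). Then det 𝔅_p ≠ 0 for every such p. -/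

import Mathlib

/-!
Write `K = k + p = n + 1` and `L = l - 2p`, so that `𝔅_p` is the `(L+1) × (L+1)` matrix whose
row `a` lists the coefficients of `X^{L+1}, …, X^{2L+1}` in
`t_a = (X + 2) (X + 1)^{n+a} X^{2(L-a)}`. A null vector `v` of `𝔅_p` yields `G = ∑ v_a t_a`
with these coefficients zero. Every `t_a`, hence `G`, is fixed by
`P ↦ (1 + X)^N P(-X/(1 + X))` with `N = 2n + 2L + 1`; comparing coefficients of `G` with those
of its transform in degrees `L+1, …, 2L+1` gives a linear system in the coefficients of `G` of
degree `≤ L` with a nonsingular binomial (Vandermonde type) matrix. Hence `X^{2L+2} ∣ G`; as also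
`(X + 1)^n ∣ G` and `deg G ≤ 2L + n + 1`, `G = 0`, and the `t_a` have distinct degrees, so `v = 0`.
-/

/-- Binomial coefficient `C(n, m)` with an integer lower argument, extended by zero
for `m < 0` (and it is zero for `m > n` via `Nat.choose`). -/
def chooseZ (n : ℕ) (m : ℤ) : ℕ := if 0 ≤ m then n.choose m.toNat else 0

open Polynomial Finset

theorem det_choose_add_ne_zero {F : Type*} [Field F] [CharZero F] {n : ℕ} (x : Fin n → ℕ)
    (y : ℕ) (hx : ∀ i, y ≤ x i) (hx_inj : Function.Injective x) :
    (Matrix.of fun i j : Fin n => ((x i).choose (y + j) : F)).det ≠ 0 := by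
  set q : Fin n → F[X] := fun j => (descPochhammer F j).comp (X - C (y : F))
  have hq_monic : ∀ j, (q j).Monic := fun j => (monic_descPochhammer F j).comp_X_sub_C _
  have hq_deg : ∀ j, (q j).natDegree = j := fun j => by
    rw [natDegree_comp, descPochhammer_natDegree, natDegree_X_sub_C, mul_one]
  -- `descPochhammer (y + j) = descPochhammer y * q j` splits off a row and a column factor.
  have hentry : ∀ i j : Fin n, ((x i).choose (y + j) : F) =
      (y.factorial * (x i).choose y : F) *
        (((y + j).factorial : F)⁻¹ * (q j).eval (x i : F)) := by
    intro i j
    have h := congrArg (eval (x i : F)) (descPochhammer_mul (R := F) y j)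
    simp only [eval_mul, eval_comp, eval_sub, eval_X, eval_natCast,
      descPochhammer_eval_eq_descFactorial, Nat.descFactorial_eq_factorial_mul_choose] at h
    simp only [q, eval_comp, eval_sub, eval_X, eval_C]
    push_cast at h
    have : ((y + j).factorial : F) ≠ 0 := Nat.cast_ne_zero.mpr (Nat.factorial_ne_zero _)
    field_simp
    linear_combination -h
  have hdet : (Matrix.of fun i j : Fin n => ((x i).choose (y + j) : F)).det =
      (∏ i, (y.factorial * (x i).choose y : F)) * ((∏ j : Fin n, ((y + j).factorial : F)⁻¹) *
        (Matrix.of fun i j => (q j).eval (x i : F)).det) := by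
    rw [← Matrix.det_mul_row, ← Matrix.det_mul_column]
    exact congrArg _ (Matrix.ext hentry)
  rw [hdet, ← Matrix.det_eval_matrixOfPolynomials_eq_det_vandermonde _ q hq_deg hq_monic]
  refine mul_ne_zero (prod_ne_zero_iff.mpr fun i _ => ?_) (mul_ne_zero ?_ ?_)
  · exact_mod_cast mul_ne_zero (Nat.factorial_ne_zero y) (Nat.choose_pos (hx i)).ne'
  · exact prod_ne_zero_iff.mpr fun j _ =>
      inv_ne_zero (Nat.cast_ne_zero.mpr (Nat.factorial_ne_zero _))
  · exact Matrix.det_vandermonde_ne_zero_iff.mpr (Nat.cast_injective.comp hx_inj)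

theorem linearIndependent_of_natDegree_injective {F ι : Type*} [Field F] [Fintype ι]
    {f : ι → F[X]} (hf : ∀ i, f i ≠ 0) (hdeg : Function.Injective fun i => (f i).natDegree) :
    LinearIndependent F f := by
  classical
  refine Fintype.linearIndependent_iff.mpr fun g hg i => by_contra fun hgi => ?_
  have hdeg_smul : ∀ j, g j ≠ 0 → (g j • f j).degree = (f j).degree := fun j hj =>
    degree_smul_of_smul_regular _ (IsSMulRegular.of_ne_zero hj)
  have hsum := degree_sum_eq_of_disjoint (fun j => g j • f j) univ ?_
  · rw [hg, degree_zero, eq_comm, Finset.sup_eq_bot_iff] at hsum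
    exact hf i (degree_eq_bot.mp ((hdeg_smul i hgi).symm.trans (hsum i (mem_univ i))))
  · rintro j ⟨-, hj⟩ k ⟨-, hk⟩ hjk hjk'
    have hgj : g j ≠ 0 := fun h => hj (by simp [h])
    have hgk : g k ≠ 0 := fun h => hk (by simp [h])
    simp only [Function.comp_apply, hdeg_smul j hgj, hdeg_smul k hgk] at hjk'
    exact hjk (hdeg (natDegree_eq_of_degree_eq hjk'))

section Mobius

variable {R F : Type*} [CommRing R] [Field F]

-- For `P.natDegree ≤ N` this is `(X + 1) ^ N * P(-X / (X + 1))`, see `eval_mobiusTransform`.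
noncomputable def mobiusTransform (N : ℕ) (P : R[X]) : R[X] :=
  ∑ i ∈ range (N + 1), C (P.coeff i) * (-X) ^ i * (X + 1) ^ (N - i)

theorem coeff_mobiusTransform (N : ℕ) (P : R[X]) {m : ℕ} (hm : m ≤ N) :
    (mobiusTransform N P).coeff m =
      ∑ i ∈ range (m + 1), (-1) ^ i * P.coeff i * ((N - i).choose (m - i) : R) := by
  have hterm : ∀ i, (C (P.coeff i) * (-X) ^ i * (X + 1) ^ (N - i)).coeff m =
      if i ≤ m then (-1) ^ i * P.coeff i * ((N - i).choose (m - i) : R) else 0 := by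
    intro i
    rw [neg_pow, show C (P.coeff i) * ((-1) ^ i * X ^ i) * (X + 1) ^ (N - i) =
      C ((-1) ^ i * P.coeff i) * (X ^ i * (X + 1) ^ (N - i)) by simp; ring,
      coeff_C_mul, coeff_X_pow_mul', coeff_X_add_one_pow]
    split_ifs <;> simp
  rw [mobiusTransform, finsetSum_coeff,
    ← sum_subset (range_subset_range.mpr (Nat.succ_le_succ hm))]
  · exact sum_congr rfl fun i hi => by rw [hterm, if_pos (by simpa [Nat.lt_succ_iff] using hi)]
  · intro i _ hi
    rw [hterm, if_neg (by simpa [Nat.lt_succ_iff] using hi)]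

theorem eval_mobiusTransform (N : ℕ) {P : F[X]} (hP : P.natDegree ≤ N) {x : F}
    (hx : x + 1 ≠ 0) :
    (mobiusTransform N P).eval x = (x + 1) ^ N * P.eval (-x / (x + 1)) := by
  rw [mobiusTransform, eval_finsetSum, eval_eq_sum_range' (Nat.lt_succ_of_le hP), mul_sum]
  refine sum_congr rfl fun i hi => ?_
  rw [← Nat.sub_add_cancel (Nat.lt_succ_iff.mp (mem_range.mp hi)), pow_add, Nat.add_sub_cancel]
  simp only [eval_mul, eval_C, eval_pow, eval_neg, eval_X, eval_add, eval_one]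
  have hpow : (-x) ^ i = (x + 1) ^ i * (-x / (x + 1)) ^ i := by
    rw [← mul_pow, mul_div_cancel₀ _ hx]
  rw [hpow]
  ring

theorem mobiusTransform_eq_self [Infinite F] {N : ℕ} {P : F[X]} (hP : P.natDegree ≤ N)
    (hinv : ∀ x : F, x + 1 ≠ 0 → (x + 1) ^ N * P.eval (-x / (x + 1)) = P.eval x) :
    mobiusTransform N P = P := by
  refine eq_of_infinite_eval_eq _ _ ((Set.finite_singleton (-1 : F)).infinite_compl.mono ?_)
  intro x hx
  have hx : x + 1 ≠ 0 := fun h => hx (eq_neg_of_add_eq_zero_left h)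
  exact (eval_mobiusTransform N hP hx).trans (hinv x hx)

theorem X_pow_dvd_of_mobius_invariant [CharZero F] {N L : ℕ} (hLN : 2 * L + 1 ≤ N) {P : F[X]}
    (hinv : mobiusTransform N P = P) (hmid : ∀ m, L + 1 ≤ m → m ≤ 2 * L + 1 → P.coeff m = 0) :
    X ^ (2 * L + 2) ∣ P := by
  set c : Fin (L + 1) → F := fun i => (-1) ^ (i : ℕ) * P.coeff i
  set A : Matrix (Fin (L + 1)) (Fin (L + 1)) F :=
    Matrix.of fun i s => ((N - i).choose (N - (2 * L + 1) + s) : F)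
  have hA : A.det ≠ 0 := by
    refine det_choose_add_ne_zero (fun i : Fin (L + 1) => N - i) _ (fun i => by omega) ?_
    intro i j hij
    ext
    simp only at hij
    omega
  have hcA : Matrix.vecMul c A = 0 := by
    funext s
    have hm : 2 * L + 1 - s ≤ N := by omega
    set f : ℕ → F := fun i => (-1) ^ i * P.coeff i * ((N - i).choose (2 * L + 1 - s - i) : F)
    have hvanish : ∀ i ∈ Ico (L + 1) (2 * L + 1 - s + 1), f i = 0 := fun i hi => by
      rw [mem_Ico] at hi
      simp only [f, hmid i hi.1 (by omega), mul_zero, zero_mul]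
    -- Column `s` expresses `P.coeff (2L+1-s) = 0` through the transform; by `hmid` only the
    -- coefficients of degree `≤ L` contribute, and `C(N-i, 2L+1-s-i) = C(N-i, N-(2L+1)+s)`.
    rw [Matrix.vecMul, dotProduct, Pi.zero_apply, ← hmid (2 * L + 1 - s) (by omega) (by omega),
      ← hinv, coeff_mobiusTransform N P hm,
      ← sum_range_add_sum_Ico f (by omega : L + 1 ≤ 2 * L + 1 - s + 1),
      sum_eq_zero hvanish, add_zero, ← Fin.sum_univ_eq_sum_range]
    refine sum_congr rfl fun i _ => ?_
    simp only [f, c, A, Matrix.of_apply]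
    rw [← Nat.choose_symm (by omega)]
    congr 3
    omega
  have hc : c = 0 := Matrix.eq_zero_of_vecMul_eq_zero hA hcA
  refine X_pow_dvd_iff.mpr fun d hd => ?_
  by_cases hdL : d ≤ L
  · simpa [c] using congrFun hc ⟨d, by omega⟩
  · exact hmid d (by omega) (by omega)

end Mobius

noncomputable def rowPoly (n L a : ℕ) : ℚ[X] := (X + 2) * (X + 1) ^ (n + a) * X ^ (2 * (L - a))

theorem rowPoly_eval_mobius {n L a : ℕ} (ha : a ≤ L) {x : ℚ} (hx : x + 1 ≠ 0) :
    (x + 1) ^ (2 * n + 2 * L + 1) * (rowPoly n L a).eval (-x / (x + 1)) =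
      (rowPoly n L a).eval x := by
  have h2 : -x / (x + 1) + 2 = (x + 2) / (x + 1) := by field_simp; ring
  have h1 : -x / (x + 1) + 1 = 1 / (x + 1) := by field_simp; ring
  have hN : 2 * n + 2 * L + 1 = 1 + (n + a) + 2 * (L - a) + (n + a) := by omega
  simp only [rowPoly, eval_mul, eval_pow, eval_add, eval_X, eval_ofNat, eval_one]
  rw [h2, h1, div_pow, div_pow, (even_two_mul _).neg_pow, hN, pow_add, pow_add, pow_add]
  field_simp
  rw [one_pow, mul_one]

theorem rowPoly_monic (n L a : ℕ) : (rowPoly n L a).Monic := by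
  unfold rowPoly
  monicity!

theorem natDegree_rowPoly {n L a : ℕ} (ha : a ≤ L) :
    (rowPoly n L a).natDegree = 2 * L + n + 1 - a := by
  have : (rowPoly n L a).natDegree = 1 + (n + a) + 2 * (L - a) := by
    unfold rowPoly
    compute_degree!
  omega

theorem linearIndependent_rowPoly (n L : ℕ) :
    LinearIndependent ℚ fun a : Fin (L + 1) => rowPoly n L a :=
  linearIndependent_of_natDegree_injective (fun a => (rowPoly_monic n L a).ne_zero)
    fun a b hab => by
      simp only [natDegree_rowPoly a.is_le, natDegree_rowPoly b.is_le] at hab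
      omega

-- The paper's `𝔅` for `k = K`, `l = L`, with `j = a` and `i = b + 1`; the matrix `𝔅_p` is
-- `bMatrix (k + p) (l - 2 * p)`.
def bMatrix (K L : ℕ) : Matrix (Fin (L + 1)) (Fin (L + 1)) ℚ :=
  Matrix.of fun a b => ((chooseZ (K + (a : ℕ) - 1) (2 * ((a : ℕ) : ℤ) + ((b : ℕ) + 1) - (L : ℤ))
    + chooseZ (K + (a : ℕ)) (2 * ((a : ℕ) : ℤ) + ((b : ℕ) + 1) - (L : ℤ)) : ℕ) : ℚ)

theorem coeff_rowPoly (n L : ℕ) (a b : Fin (L + 1)) :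
    (rowPoly n L a).coeff (L + 1 + b) = bMatrix (n + 1) L a b := by
  have hsplit :
      rowPoly n L a = ((X + 1) ^ (n + a) + (X + 1) ^ (n + a + 1)) * X ^ (2 * (L - a)) := by
    rw [rowPoly, pow_succ]
    ring
  rw [hsplit, coeff_mul_X_pow', bMatrix, Matrix.of_apply, chooseZ, chooseZ,
    show n + 1 + (a : ℕ) - 1 = n + a by omega, show n + 1 + (a : ℕ) = n + a + 1 by omega]
  split_ifs
  · rw [coeff_add, coeff_X_add_one_pow, coeff_X_add_one_pow,
      show (2 * ((a : ℕ) : ℤ) + ((b : ℕ) + 1) - (L : ℤ)).toNat = L + 1 + b - 2 * (L - a) by omega]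
    push_cast
    rfl
  · omega
  · omega
  · simp

theorem det_bMatrix_ne_zero {K : ℕ} (L : ℕ) (hK : 1 ≤ K) : (bMatrix K L).det ≠ 0 := by
  obtain ⟨n, rfl⟩ : ∃ n, K = n + 1 := ⟨K - 1, by omega⟩
  intro hdet
  obtain ⟨v, hv, hvB⟩ := Matrix.exists_vecMul_eq_zero_iff.mpr hdet
  set G := ∑ a, v a • rowPoly n L a
  have hG_deg : G.natDegree ≤ 2 * L + n + 1 :=
    natDegree_sum_le_of_forall_le _ _ fun a _ =>
      (natDegree_smul_le _ _).trans (by rw [natDegree_rowPoly a.is_le]; omega)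
  have hG_inv : mobiusTransform (2 * n + 2 * L + 1) G = G :=
    mobiusTransform_eq_self (hG_deg.trans (by omega)) fun x hx => by
      simp only [G, eval_finsetSum, eval_smul, smul_eq_mul, mul_sum, mul_left_comm _ (v _),
        rowPoly_eval_mobius (Fin.is_le _) hx]
  have hG_mid : ∀ m, L + 1 ≤ m → m ≤ 2 * L + 1 → G.coeff m = 0 := by
    intro m hm₁ hm₂
    obtain ⟨b, rfl⟩ : ∃ b : Fin (L + 1), m = L + 1 + b :=
      ⟨⟨m - (L + 1), by omega⟩, by simp; omega⟩
    simpa [G, finsetSum_coeff, coeff_rowPoly, Matrix.vecMul, dotProduct] using congrFun hvB b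
  have hX : X ^ (2 * L + 2) ∣ G := X_pow_dvd_of_mobius_invariant (by omega) hG_inv hG_mid
  have hX1 : (X + 1) ^ n ∣ G := dvd_sum fun a _ => by
    rw [smul_eq_C_mul, rowPoly, pow_add]
    exact ⟨C (v a) * ((X + 2) * (X + 1) ^ (a : ℕ) * X ^ (2 * (L - a))), by ring⟩
  have hcop : IsCoprime (X ^ (2 * L + 2)) ((X + 1 : ℚ[X]) ^ n) :=
    IsCoprime.pow ⟨-1, 1, by ring⟩
  have hdeg : (X ^ (2 * L + 2) * (X + 1 : ℚ[X]) ^ n).natDegree = 2 * L + 2 + n := by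
    compute_degree!
  have hG : G = 0 := eq_zero_of_dvd_of_natDegree_lt (hcop.mul_dvd hX hX1) (by omega)
  exact hv (funext (Fintype.linearIndependent_iff.mp (linearIndependent_rowPoly n L) v hG))

theorem stmt_11 (k l : ℕ) (hk : 2 ≤ k) (p : ℕ) (hp : p ≤ l / 2) :
    (Matrix.of fun a b : Fin (l + 1 - 2 * p) =>
      ((chooseZ (k + p + (a : ℕ) - 1)
          (2 * ((p : ℤ) + (a : ℕ)) + ((b : ℕ) + 1) - (l : ℤ))
        + chooseZ (k + p + (a : ℕ))
          (2 * ((p : ℤ) + (a : ℕ)) + ((b : ℕ) + 1) - (l : ℤ)) : ℕ) : ℚ)).det ≠ 0 := by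
  have h2p : 2 * p ≤ l := by omega
  have hsize : l - 2 * p + 1 = l + 1 - 2 * p := by omega
  have hdet := det_bMatrix_ne_zero (l - 2 * p) (by omega : 1 ≤ k + p)
  rw [← Matrix.det_reindex_self (finCongr hsize)] at hdet
  convert hdet using 2
  ext a b
  simp only [bMatrix, Matrix.reindex_apply, Matrix.submatrix_apply, Matrix.of_apply,
    finCongr_symm, finCongr_apply, Fin.val_cast]
  rw [show 2 * ((p : ℤ) + (a : ℕ)) + ((b : ℕ) + 1) - (l : ℤ)
      = 2 * (a : ℤ) + ((b : ℕ) + 1) - ((l - 2 * p : ℕ) : ℤ) by push_cast [Nat.cast_sub h2p]; ring]
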